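/- arXiv:1308.6165 — 4 statements merged into one kernel-verified Lean document; each statement's English description precedes it below -/
import Mathlib

section
/- Let B be a Boolean algebra, X a set, and f : B → 𝒫(X) an injective Boolean homomorphism such that whenever S ⊆ B and the infimum ⨅S exists in B, f(⨅S) = ⋂_{s∈S} f(s). Then B is atomic: every nonzero element of B lies above an atom. -/
theorem stmt4 {B X : Type*} [BooleanAlgebra B] (f : B → Set X)
    (hinj : Function.Injective f)
    (hmeet : ∀ a b : B, f (a ⊓ b) = f a ∩ f b)
    (hcompl : ∀ a : B, f aᶜ = (f a)ᶜ)
    (htop : f ⊤ = Set.univ)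
    (hinf : ∀ (S : Set B) (b : B), IsGLB S b → f b = ⋂ s ∈ S, f s) :
    IsAtomic B := by
  constructor
  intro b
  rcases eq_or_ne b ⊥ with h | h
  · exact Or.inl h
  right
  have hbot : f ⊥ = ∅ := by
    have := hcompl ⊤
    rw [compl_top, htop] at this
    simpa using this
  have hne : f b ≠ ∅ := fun h' => h (hinj (h'.trans hbot.symm))
  obtain ⟨x, hx⟩ := Set.nonempty_iff_ne_empty.mpr hne
  set S : Set B := {a : B | x ∈ f a} with hS
  have hnotglb : ¬ IsGLB S ⊥ := by
    intro hg
    have := hinf S ⊥ hg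
    have hxbot : x ∈ f ⊥ := by
      rw [this]
      exact Set.mem_iInter₂.mpr fun s hs => hs
    rw [hbot] at hxbot
    exact hxbot
  have : ∃ c ∈ lowerBounds S, c ≠ ⊥ := by
    by_contra hcon
    push_neg at hcon
    exact hnotglb ⟨fun a _ => bot_le, fun c hc => (hcon c hc).le⟩
  obtain ⟨c, hc, hcne⟩ := this
  refine ⟨c, ⟨hcne, fun d hd => ?_⟩, hc hx⟩
  have hxd : x ∉ f d := fun hxd => hd.not_ge (hc hxd)
  have : x ∈ f dᶜ := by rw [hcompl]; exact hxd
  have hdc : d ≤ dᶜ := hd.le.trans (hc this)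
  exact le_bot_iff.mp (by simpa using hdc)
end

section
/- Let B be a Boolean algebra, a ∈ B with a ≠ ⊥, and let (X_n)_{n∈ℕ} be a countable family of subsets of B such that for each n the only lower bound of X_n is ⊥. Then there exists an ultrafilter F of B with a ∈ F such that for every n, X_n is not contained in F. -/
/-- `F` is an ultrafilter of the Boolean algebra `B` (a maximal proper filter). -/
def IsUltrafilterOn {B : Type*} [BooleanAlgebra B] (F : Set B) : Prop :=
  (⊤ : B) ∈ F ∧ (⊥ : B) ∉ F ∧
  (∀ a ∈ F, ∀ b : B, a ≤ b → b ∈ F) ∧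
  (∀ a ∈ F, ∀ b ∈ F, a ⊓ b ∈ F) ∧
  (∀ a : B, a ∈ F ∨ aᶜ ∈ F)

theorem stmt8 {B : Type*} [BooleanAlgebra B] (a : B) (ha : a ≠ ⊥)
    (X : ℕ → Set B)
    (hX : ∀ n, ∀ y : B, (∀ x ∈ X n, y ≤ x) → y = ⊥) :
    ∃ F : Set B, IsUltrafilterOn F ∧ a ∈ F ∧ ∀ n, ¬ X n ⊆ F := by
  classical
  -- step: from a nonzero element we can shrink below the complement of some x ∈ X n
  have step : ∀ b : B, b ≠ ⊥ → ∀ n : ℕ, ∃ c : B, c ≠ ⊥ ∧ c ≤ b ∧ ∃ x ∈ X n, c ≤ xᶜ := by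
    intro b hb n
    have h : ¬ ∀ x ∈ X n, b ≤ x := fun h => hb (hX n b h)
    push_neg at h
    obtain ⟨x, hx, hbx⟩ := h
    refine ⟨b ⊓ xᶜ, ?_, inf_le_left, x, hx, inf_le_right⟩
    intro hbot
    exact hbx (sdiff_eq_bot_iff.mp (by rwa [sdiff_eq]))
  choose g hg1 hg2 hg3 using step
  -- the diagonal sequence
  let c : ℕ → {b : B // b ≠ ⊥} := fun n =>
    Nat.rec ⟨a, ha⟩ (fun n p => ⟨g p.1 p.2 n, hg1 p.1 p.2 n⟩) n
  let d : ℕ → B := fun n => (c n).1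
  have hd0 : d 0 = a := rfl
  have hdsucc : ∀ n, d (n + 1) = g (c n).1 (c n).2 n := fun n => rfl
  have hdne : ∀ n, d n ≠ ⊥ := fun n => (c n).2
  have hstep : ∀ n, d (n + 1) ≤ d n := fun n => by
    rw [hdsucc]; exact hg2 _ _ _
  have hanti : ∀ {m n : ℕ}, m ≤ n → d n ≤ d m := by
    intro m n hmn
    induction n with
    | zero => rw [Nat.le_zero.mp hmn]
    | succ k ih =>
      rcases Nat.lt_or_ge m (k+1) with h | h
      · exact (hstep k).trans (ih (Nat.lt_succ_iff.mp h))
      · have : m = k + 1 := le_antisymm hmn h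
        subst this; exact le_rfl
  have hx : ∀ n, ∃ x ∈ X n, d (n + 1) ≤ xᶜ := fun n => by
    rw [hdsucc]; exact hg3 _ _ _
  -- the base filter
  set F₀ : Set B := {b | ∃ n, d n ≤ b} with hF₀
  -- the collection of proper filters containing F₀
  set S : Set (Set B) := {F | F₀ ⊆ F ∧ (⊥ : B) ∉ F ∧
      (∀ p ∈ F, ∀ q : B, p ≤ q → q ∈ F) ∧ (∀ p ∈ F, ∀ q ∈ F, p ⊓ q ∈ F)} with hS
  have hF₀S : F₀ ∈ S := by
    refine ⟨le_refl _, ?_, ?_, ?_⟩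
    · rintro ⟨n, hn⟩
      exact hdne n (le_bot_iff.mp hn)
    · rintro p ⟨n, hn⟩ q hpq
      exact ⟨n, hn.trans hpq⟩
    · rintro p ⟨n, hn⟩ q ⟨m, hm⟩
      exact ⟨max n m, le_inf ((hanti (le_max_left n m)).trans hn)
        ((hanti (le_max_right n m)).trans hm)⟩
  -- Zorn's lemma
  obtain ⟨F, hFS, hF₀F, hFmax⟩ : ∃ F ∈ S, F₀ ⊆ F ∧ ∀ G ∈ S, F ⊆ G → G = F := by
    obtain ⟨F, hsub, hmax⟩ := zorn_subset_nonempty S (fun ch hchS hch hchne => by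
      refine ⟨⋃₀ ch, ⟨?_, ?_, ?_, ?_⟩, fun s hs => Set.subset_sUnion_of_mem hs⟩
      · obtain ⟨t, ht⟩ := hchne
        exact fun b hb => Set.mem_sUnion.mpr ⟨t, ht, (hchS ht).1 hb⟩
      · rintro ⟨t, ht, hbot⟩
        exact (hchS ht).2.1 hbot
      · rintro p ⟨t, ht, hp⟩ q hpq
        exact ⟨t, ht, (hchS ht).2.2.1 p hp q hpq⟩
      · rintro p ⟨t, ht, hp⟩ q ⟨u, hu, hq⟩
        rcases hch.total ht hu with h | h
        · exact ⟨u, hu, (hchS hu).2.2.2 p (h hp) q hq⟩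
        · exact ⟨t, ht, (hchS ht).2.2.2 p hp q (h hq)⟩) F₀ hF₀S
    exact ⟨F, hmax.prop, hsub, fun G hG hFG => hmax.eq_of_ge hG hFG⟩
  obtain ⟨hF₀sub, hbot, hup, hinf⟩ := hFS
  -- ultrafilter property
  have hcompl : ∀ b : B, b ∈ F ∨ bᶜ ∈ F := by
    intro b
    by_contra hcon
    push_neg at hcon
    obtain ⟨hb, hbc⟩ := hcon
    -- one of b, bᶜ meets every element of F nontrivially
    have key : (∀ p ∈ F, p ⊓ b ≠ ⊥) ∨ (∀ p ∈ F, p ⊓ bᶜ ≠ ⊥) := by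
      by_contra hk
      push_neg at hk
      obtain ⟨⟨p, hp, hpb⟩, ⟨q, hq, hqb⟩⟩ := hk
      have hpq : p ⊓ q ∈ F := hinf p hp q hq
      have : p ⊓ q = ⊥ := by
        have h1 : p ⊓ q ⊓ b = ⊥ := le_bot_iff.mp (by
          calc p ⊓ q ⊓ b ≤ p ⊓ b := by
                exact inf_le_inf_right b inf_le_left
            _ = ⊥ := hpb)
        have h2 : p ⊓ q ⊓ bᶜ = ⊥ := le_bot_iff.mp (by
          calc p ⊓ q ⊓ bᶜ ≤ q ⊓ bᶜ := inf_le_inf_right bᶜ inf_le_right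
            _ = ⊥ := hqb)
        calc p ⊓ q = p ⊓ q ⊓ (b ⊔ bᶜ) := by rw [sup_compl_eq_top, inf_top_eq]
          _ = (p ⊓ q ⊓ b) ⊔ (p ⊓ q ⊓ bᶜ) := inf_sup_left _ _ _
          _ = ⊥ := by rw [h1, h2, sup_idem]
      exact hbot (this ▸ hpq)
    -- enlarge F by b (or bᶜ), contradicting maximality
    have enlarge : ∀ e : B, e ∉ F → (∀ p ∈ F, p ⊓ e ≠ ⊥) → False := by
      intro e he hne
      set G : Set B := {r | ∃ p ∈ F, p ⊓ e ≤ r} with hG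
      have hGS : G ∈ S := by
        refine ⟨?_, ?_, ?_, ?_⟩
        · intro r hr
          exact ⟨r, hF₀sub hr, inf_le_left⟩
        · rintro ⟨p, hp, hpe⟩
          exact hne p hp (le_bot_iff.mp hpe)
        · rintro r ⟨p, hp, hpe⟩ q hrq
          exact ⟨p, hp, hpe.trans hrq⟩
        · rintro r ⟨p, hp, hpe⟩ q ⟨p', hp', hpe'⟩
          exact ⟨p ⊓ p', hinf p hp p' hp',
            le_inf ((inf_le_inf_right e inf_le_left).trans hpe)
              ((inf_le_inf_right e inf_le_right).trans hpe')⟩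
      have hFG : F ⊆ G := fun p hp => ⟨p, hp, inf_le_left⟩
      have hGF : G = F := hFmax G hGS hFG
      have heG : e ∈ G := ⟨⊤, hup a (hF₀sub ⟨0, hd0.le⟩) ⊤ le_top, inf_le_right⟩
      exact he (hGF ▸ heG)
    rcases key with h | h
    · exact enlarge b hb h
    · exact enlarge bᶜ hbc h
  have htop : (⊤ : B) ∈ F := hup a (hF₀sub ⟨0, hd0.le⟩) ⊤ le_top
  refine ⟨F, ⟨htop, hbot, hup, hinf, hcompl⟩, hF₀sub ⟨0, hd0.le⟩, ?_⟩
  intro n hsub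
  obtain ⟨x, hxX, hxle⟩ := hx n
  have hxF : x ∈ F := hsub hxX
  have hdF : d (n + 1) ∈ F := hF₀sub ⟨n + 1, le_rfl⟩
  have : x ⊓ d (n + 1) ∈ F := hinf x hxF _ hdF
  have hb : x ⊓ d (n + 1) = ⊥ := le_bot_iff.mp (by
    calc x ⊓ d (n + 1) ≤ x ⊓ xᶜ := inf_le_inf_left x hxle
      _ = ⊥ := inf_compl_eq_bot)
  exact hbot (hb ▸ this)
end

section
/- Let B be a Boolean algebra and c : B → B a function satisfying: c ⊥ = ⊥; x ≤ c x for all x; c(x ⊔ y) = c x ⊔ c y for all x, y; and c(x ⊓ c y) = c x ⊓ c y for all x, y. Then for any atoms a, b of B: a ≤ c b if and only if c a = c b. -/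
theorem stmt10 {B : Type*} [BooleanAlgebra B] (c : B → B)
    (hbot : c ⊥ = ⊥)
    (hle : ∀ x : B, x ≤ c x)
    (hadd : ∀ x y : B, c (x ⊔ y) = c x ⊔ c y)
    (hmm : ∀ x y : B, c (x ⊓ c y) = c x ⊓ c y)
    {a b : B} (hA : IsAtom a) (hB : IsAtom b) :
    a ≤ c b ↔ c a = c b := by
  constructor
  · intro h
    have h1 : a ⊓ c b = a := inf_eq_left.mpr h
    have hab : c a ≤ c b := by
      have := hmm a b
      rw [h1] at this
      exact this.le.trans inf_le_right
    have hne : b ⊓ c a ≠ ⊥ := by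
      intro hbot'
      have hz : c (b ⊓ c a) = ⊥ := by rw [hbot', hbot]
      rw [hmm b a] at hz
      have ha : a ≤ c b ⊓ c a := le_inf h (hle a)
      rw [hz] at ha
      exact hA.1 (le_bot_iff.mp ha)
    have hba : b ≤ c a := by
      rcases hB.le_iff.mp (inf_le_left : b ⊓ c a ≤ b) with h' | h'
      · exact absurd h' hne
      · calc b = b ⊓ c a := h'.symm
          _ ≤ c a := inf_le_right
    have h2 : b ⊓ c a = b := inf_eq_left.mpr hba
    have hba' : c b ≤ c a := by
      have := hmm b a
      rw [h2] at this
      exact this.le.trans inf_le_right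
    exact le_antisymm hab hba'
  · intro h
    exact h ▸ hle a
end

section
/- Let B be a Boolean algebra and c : B → B with c ⊥ = ⊥, x ≤ c x, c(x ⊔ y) = c x ⊔ c y, and c(x ⊓ c y) = c x ⊓ c y for all x, y. Let d ∈ B satisfy c d = ⊤ and d ⊓ c(d ⊓ x) ≤ x for all x ∈ B. Then for every atom a of B, the element d ⊓ c a is an atom of B. -/
theorem stmt11 {B : Type*} [BooleanAlgebra B] (c : B → B)
    (hbot : c ⊥ = ⊥)
    (hle : ∀ x : B, x ≤ c x)
    (hadd : ∀ x y : B, c (x ⊔ y) = c x ⊔ c y)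
    (hmm : ∀ x y : B, c (x ⊓ c y) = c x ⊓ c y)
    (d : B) (hd : c d = ⊤) (hd7 : ∀ x : B, d ⊓ c (d ⊓ x) ≤ x) :
    ∀ a : B, IsAtom a → IsAtom (d ⊓ c a) := by
  have cmono : ∀ x y : B, x ≤ y → c x ≤ c y := by
    intro x y h
    have h2 := hadd x y
    rw [sup_eq_right.mpr h] at h2
    exact le_sup_left.trans h2.ge
  have ctop : c ⊤ = ⊤ := top_le_iff.mp (hd ▸ cmono d ⊤ le_top)
  have cidem : ∀ y : B, c (c y) = c y := by
    intro y
    have h2 := hmm ⊤ y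
    rwa [ctop, top_inf_eq] at h2
  intro a ha
  constructor
  · intro h
    have h2 := hmm d a
    rw [hd, top_inf_eq, h, hbot] at h2
    exact ha.1 (le_bot_iff.mp (h2 ▸ hle a))
  · intro b hb
    by_contra hb0
    have hbd : b ≤ d := hb.le.trans inf_le_left
    have hbca : b ≤ c a := hb.le.trans inf_le_right
    have hbeq : b = d ⊓ c b := by
      refine le_antisymm (le_inf hbd (hle b)) ?_
      have h7 := hd7 b
      rwa [inf_eq_right.mpr hbd] at h7
    have hacb : a ≤ c b := by
      have hne : a ⊓ c b ≠ ⊥ := by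
        intro h0
        have h2 := hmm a b
        rw [h0, hbot] at h2
        exact hb0 (le_bot_iff.mp (h2 ▸ le_inf hbca (hle b)))
      rcases lt_or_eq_of_le (inf_le_left : a ⊓ c b ≤ a) with hlt | heq
      · exact absurd (ha.2 _ hlt) hne
      · exact heq ▸ inf_le_right
    have hcab : c a ≤ c b := (cidem b) ▸ cmono a (c b) hacb
    have hfin : d ⊓ c a ≤ b := hbeq ▸ inf_le_inf_left d hcab
    exact hb.ne (le_antisymm hb.le hfin)
end
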